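/- For a conformally separable metric ds² = Ξ₁(x) G_{αβ}(x^γ) dx^α dx^β + Ξ₂(x) G_{AB}(x^C) dx^A dx^B (α,β,γ ∈ {1,…,p}, A,B,C ∈ {p+1,…,n}), with P the leaf metric Ξ₁G_{αβ} and Π = Ξ₂G_{AB}, the only nonvanishing components of M, E, W are M_{αAB} = ∂_α(Ξ₂G_{AB}), M_{Aαβ} = −∂_A(Ξ₁G_{αβ}), E_A = −∂_A log|det(Ξ₁G_{αβ})|, W_α = −∂_α log|det(Ξ₂G_{AB})|, and consequently T_{abc} = 0. -/

import Mathlib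

open scoped BigOperators

noncomputable section

/-- Points of the local chart, modelled as `ℝⁿ`. -/
abbrev Pt (n : ℕ) := Fin n → ℝ
/-- Scalar fields. -/
abbrev Sc (n : ℕ) := Pt n → ℝ
/-- Fields with one index. -/
abbrev Ten1 (n : ℕ) := Pt n → Fin n → ℝ
/-- Fields with two indices. -/
abbrev Ten2 (n : ℕ) := Pt n → Fin n → Fin n → ℝ
/-- Fields with three indices. -/
abbrev Ten3 (n : ℕ) := Pt n → Fin n → Fin n → Fin n → ℝ
/-- Fields with four indices. -/
abbrev Ten4 (n : ℕ) := Pt n → Fin n → Fin n → Fin n → Fin n → ℝ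

variable {n : ℕ}

/-- Partial derivative `∂ᵢ f (x)`. -/
def pd (i : Fin n) (f : Sc n) (x : Pt n) : ℝ :=
  fderiv ℝ f x (Pi.single i 1)

/-- Christoffel symbols `Γ^a_{bc}` of a metric `g` with inverse metric `ginv`. -/
def christoffel (g ginv : Ten2 n) : Ten3 n := fun x a b c =>
  (1/2) * ∑ e, ginv x a e *
    (pd b (fun y => g y c e) x + pd c (fun y => g y b e) x - pd e (fun y => g y b c) x)

/-- Covariant derivative `∇_a T_{bc}` for a connection with coefficients `Γ^r_{ab}`. -/
def cov2 (Γ : Ten3 n) (T : Ten2 n) : Ten3 n := fun x a b c =>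
  pd a (fun y => T y b c) x - (∑ r, Γ x r a b * T x r c) - ∑ r, Γ x r a c * T x b r

/-- Covariant derivative `∇_e T^{ab}`. -/
def cov20 (Γ : Ten3 n) (T : Ten2 n) : Ten3 n := fun x e a b =>
  pd e (fun y => T y a b) x + (∑ r, Γ x a e r * T x r b) + ∑ r, Γ x b e r * T x a r

/-- Covariant derivative `∇_e T^a_b` (first index of `T` contravariant). -/
def cov11 (Γ : Ten3 n) (T : Ten2 n) : Ten3 n := fun x e a b =>
  pd e (fun y => T y a b) x + (∑ r, Γ x a e r * T x r b) - ∑ r, Γ x r e b * T x a r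

/-- Covariant derivative `∇_a ω_b` of a 1-form. -/
def cov1 (Γ : Ten3 n) (ω : Ten1 n) : Ten2 n := fun x a b =>
  pd a (fun y => ω y b) x - ∑ r, Γ x r a b * ω x r

/-- Covariant derivative `∇_b ξ^a` of a vector field; result indexed as `x a b` = `∇_b ξ^a`. -/
def covVec (Γ : Ten3 n) (ξ : Ten1 n) : Ten2 n := fun x a b =>
  pd b (fun y => ξ y a) x + ∑ r, Γ x a b r * ξ x r

/-- Covariant derivative `∇_e L^a_{bc}` of a (1,2) tensor; result indexed `x e a b c`. -/
def cov12 (Γ : Ten3 n) (L : Ten3 n) : Ten4 n := fun x e a b c =>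
  pd e (fun y => L y a b c) x + (∑ r, Γ x a e r * L x r b c)
    - (∑ r, Γ x r e b * L x a r c) - ∑ r, Γ x r e c * L x a b r

/-- Curvature tensor `R^a_{bcd} = ∂_c Γ^a_{db} - ∂_d Γ^a_{cb} + Γ^a_{rc}Γ^r_{db} - Γ^a_{rd}Γ^r_{cb}`. -/
def riem (Γ : Ten3 n) : Ten4 n := fun x a b c d =>
  pd c (fun y => Γ y a d b) x - pd d (fun y => Γ y a c b) x
    + (∑ r, Γ x a r c * Γ x r d b) - ∑ r, Γ x a r d * Γ x r c b

/-- Action of a vector field on a scalar, `ξ(f)`. -/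
def lieSc (ξ : Ten1 n) (f : Sc n) : Sc n := fun x => ∑ c, ξ x c * pd c f x

/-- Lie derivative of a 1-form. -/
def lie1 (ξ : Ten1 n) (ω : Ten1 n) : Ten1 n := fun x a =>
  (∑ c, ξ x c * pd c (fun y => ω y a) x) + ∑ c, pd a (fun y => ξ y c) x * ω x c

/-- Lie derivative of a covariant 2-tensor `T_{ab}`. -/
def lie2 (ξ : Ten1 n) (T : Ten2 n) : Ten2 n := fun x a b =>
  (∑ c, ξ x c * pd c (fun y => T y a b) x)
    + (∑ c, pd a (fun y => ξ y c) x * T x c b)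
    + ∑ c, pd b (fun y => ξ y c) x * T x a c

/-- Lie derivative of a contravariant 2-tensor `T^{ab}`. -/
def lie20 (ξ : Ten1 n) (T : Ten2 n) : Ten2 n := fun x a b =>
  (∑ c, ξ x c * pd c (fun y => T y a b) x)
    - (∑ c, pd c (fun y => ξ y a) x * T x c b)
    - ∑ c, pd c (fun y => ξ y b) x * T x a c

/-- Lie derivative of a mixed tensor `T^a_b`. -/
def lie11 (ξ : Ten1 n) (T : Ten2 n) : Ten2 n := fun x a b =>
  (∑ c, ξ x c * pd c (fun y => T y a b) x)
    - (∑ c, pd c (fun y => ξ y a) x * T x c b)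
    + ∑ c, pd b (fun y => ξ y c) x * T x a c

/-- Lie derivative of a covariant 3-tensor `T_{abc}`. -/
def lie3 (ξ : Ten1 n) (T : Ten3 n) : Ten3 n := fun x a b c =>
  (∑ d, ξ x d * pd d (fun y => T y a b c) x)
    + (∑ d, pd a (fun y => ξ y d) x * T x d b c)
    + (∑ d, pd b (fun y => ξ y d) x * T x a d c)
    + ∑ d, pd c (fun y => ξ y d) x * T x a b d

/-- Lie derivative of a (1,2) tensor `T^a_{bc}`. -/
def lie12 (ξ : Ten1 n) (T : Ten3 n) : Ten3 n := fun x a b c =>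
  (∑ d, ξ x d * pd d (fun y => T y a b c) x)
    - (∑ d, pd d (fun y => ξ y a) x * T x d b c)
    + (∑ d, pd b (fun y => ξ y d) x * T x a d c)
    + ∑ d, pd c (fun y => ξ y d) x * T x a b d

/-- Lie derivative of connection coefficients `£_ξ Γ^a_{bc}` (standard coordinate formula,
equivalent to the derivative of the pullback of the connection by the flow of `ξ`). -/
def lieConn (ξ : Ten1 n) (Γ : Ten3 n) : Ten3 n := fun x a b c =>
  (∑ d, ξ x d * pd d (fun y => Γ y a b c) x)
    - (∑ d, pd d (fun y => ξ y a) x * Γ x d b c)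
    + (∑ d, pd b (fun y => ξ y d) x * Γ x a d c)
    + (∑ d, pd c (fun y => ξ y d) x * Γ x a b d)
    + pd b (fun y => pd c (fun z => ξ z a) y) x

/-- Lie bracket of vector fields. -/
def bracket (ξ η : Ten1 n) : Ten1 n := fun x a =>
  (∑ c, ξ x c * pd c (fun y => η y a) x) - ∑ c, η x c * pd c (fun y => ξ y a) x

/-- Index raising of the first index: `T^a_b = g^{ac} T_{cb}`. -/
def mixUp (ginv T : Ten2 n) : Ten2 n := fun x a b => ∑ c, ginv x a c * T x c b

/-- Raising both indices: `T^{ab} = g^{ac} g^{bd} T_{cd}`. -/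
def up2 (ginv T : Ten2 n) : Ten2 n := fun x a b => ∑ c, ∑ d, ginv x a c * ginv x b d * T x c d

/-- The tensor `M_{abc} = ∇_b P_{ac} + ∇_c P_{ab} - ∇_a P_{bc}` (Levi-Civita connection of `g`). -/
def Mtens (g ginv P : Ten2 n) : Ten3 n := fun x a b c =>
  cov2 (christoffel g ginv) P x b a c + cov2 (christoffel g ginv) P x c a b
    - cov2 (christoffel g ginv) P x a b c

/-- The 1-form `E_a = M_{acb} P^{cb}`. -/
def Eform (g ginv P : Ten2 n) : Ten1 n := fun x a =>
  ∑ c, ∑ b, Mtens g ginv P x a c b * up2 ginv P x c b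

/-- The 1-form `W_a = -M_{acb} Π^{cb}`. -/
def Wform (g ginv P Q : Ten2 n) : Ten1 n := fun x a =>
  - ∑ c, ∑ b, Mtens g ginv P x a c b * up2 ginv Q x c b

/-- The tensor `T_{abc} = M_{abc} + W_a Π_{bc}/(n-p) - E_a P_{bc}/p`. -/
def Ttens (p : ℝ) (g ginv P Q : Ten2 n) : Ten3 n := fun x a b c =>
  Mtens g ginv P x a b c + (1/((n : ℝ) - p)) * Wform g ginv P Q x a * Q x b c
    - (1/p) * Eform g ginv P x a * P x b c

/-- The difference tensor `L^a_{bc}` of the bi-conformal connection. -/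
def Ltens (p : ℝ) (g ginv P Q : Ten2 n) : Ten3 n := fun x a b c =>
  (1/(2*p)) * (Eform g ginv P x b * mixUp ginv P x a c
      + Eform g ginv P x c * mixUp ginv P x a b)
  + (1/(2*((n : ℝ) - p))) * (Wform g ginv P Q x b * mixUp ginv Q x a c
      + Wform g ginv P Q x c * mixUp ginv Q x a b)
  + (1/2) * ∑ r, (mixUp ginv P x a r - mixUp ginv Q x a r)
      * (∑ s, ginv x r s * Mtens g ginv P x s b c)

/-- The bi-conformal connection `Γ̄^a_{bc} = γ^a_{bc} + L^a_{bc}`. -/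
def biconn (p : ℝ) (g ginv P Q : Ten2 n) : Ten3 n := fun x a b c =>
  christoffel g ginv x a b c + Ltens p g ginv P Q x a b c

/-- The standing hypotheses: `g` a smooth pseudo-Riemannian metric with inverse `ginv`, and
`P`, `Q` smooth symmetric orthogonal complementary projectors with respect to `g`. -/
def ProjectorSetup (g ginv P Q : Ten2 n) : Prop :=
  (∀ a b, ContDiff ℝ (⊤ : ℕ∞) (fun x => g x a b)) ∧
  (∀ a b, ContDiff ℝ (⊤ : ℕ∞) (fun x => ginv x a b)) ∧
  (∀ a b, ContDiff ℝ (⊤ : ℕ∞) (fun x => P x a b)) ∧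
  (∀ x a b, g x a b = g x b a) ∧
  (∀ x a b, ginv x a b = ginv x b a) ∧
  (∀ x a b, P x a b = P x b a) ∧
  (∀ x a b, Q x a b = Q x b a) ∧
  (∀ x a b, (∑ c, g x a c * ginv x c b) = if a = b then (1:ℝ) else 0) ∧
  (∀ x a b, P x a b + Q x a b = g x a b) ∧
  (∀ x a b, (∑ c, P x a c * mixUp ginv P x c b) = P x a b) ∧
  (∀ x a b, (∑ c, Q x a c * mixUp ginv Q x c b) = Q x a b) ∧
  (∀ x a b, (∑ c, P x a c * mixUp ginv Q x c b) = 0)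

section Helpers
variable {n : ℕ}

theorem pd_congr {i : Fin n} {f g : Sc n} (h : ∀ y, f y = g y) (x : Pt n) :
    pd i f x = pd i g x := by
  have : f = g := funext h
  rw [this]

theorem pd_const (i : Fin n) (c : ℝ) (x : Pt n) : pd i (fun _ => c) x = 0 := by
  simp [pd]

theorem pd_zero_of_invariant (i : Fin n) (f : Sc n)
    (h : ∀ (y : Pt n) (t : ℝ), f (y + t • (Pi.single i 1 : Pt n)) = f y) (x : Pt n) :
    pd i f x = 0 := by
  by_cases hd : DifferentiableAt ℝ f x
  · set v : Pt n := Pi.single i 1 with hv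
    have hc : HasDerivAt (fun t : ℝ => x + t • v) v 0 := by
      have := ((hasDerivAt_id (0:ℝ)).smul_const v).const_add x
      simpa using this
    have h2 : HasDerivAt (fun t : ℝ => f (x + t • v))
        (fderiv ℝ f x v) 0 := by
      have h3 : HasFDerivAt f (fderiv ℝ f x) (x + (0:ℝ) • v) := by
        simpa using hd.hasFDerivAt
      exact h3.comp_hasDerivAt 0 hc
    have h4 : (fun t : ℝ => f (x + t • v)) = fun _ => f x := by
      funext t; exact h x t
    rw [h4] at h2
    have := h2.unique (hasDerivAt_const 0 (f x))
    simpa [pd] using this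
  · simp [pd, fderiv_zero_of_not_differentiableAt hd]

theorem pd_add {i : Fin n} {f g : Sc n} {x : Pt n}
    (hf : DifferentiableAt ℝ f x) (hg : DifferentiableAt ℝ g x) :
    pd i (fun y => f y + g y) x = pd i f x + pd i g x := by
  unfold pd
  rw [fderiv_fun_add hf hg]
  simp

theorem pd_mul {i : Fin n} {f g : Sc n} {x : Pt n}
    (hf : DifferentiableAt ℝ f x) (hg : DifferentiableAt ℝ g x) :
    pd i (fun y => f y * g y) x = pd i f x * g x + f x * pd i g x := by
  unfold pd
  rw [fderiv_fun_mul hf hg]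
  simp only [ContinuousLinearMap.add_apply, ContinuousLinearMap.smul_apply, smul_eq_mul]
  ring

theorem pd_log {i : Fin n} {f : Sc n} {x : Pt n}
    (hf : DifferentiableAt ℝ f x) (h0 : f x ≠ 0) :
    pd i (fun y => Real.log (f y)) x = (f x)⁻¹ * pd i f x := by
  unfold pd
  have h := (Real.hasDerivAt_log h0).comp_hasFDerivAt x hf.hasFDerivAt
  have h' : fderiv ℝ (fun y => Real.log (f y)) x = (f x)⁻¹ • fderiv ℝ f x := by
    simpa [Function.comp_def] using h.fderiv
  rw [h']
  simp [smul_eq_mul]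

theorem diffAt_finset_prod {ι : Type*} [DecidableEq ι] (s : Finset ι) (f : ι → Sc n) (x : Pt n)
    (h : ∀ i ∈ s, DifferentiableAt ℝ (f i) x) :
    DifferentiableAt ℝ (fun y => ∏ i ∈ s, f i y) x := by
  classical
  induction s using Finset.induction_on with
  | empty => simpa using differentiableAt_const (1:ℝ)
  | @insert a s ha ih =>
    simp only [Finset.prod_insert ha]
    exact (h a (Finset.mem_insert_self a s)).mul
      (ih fun i hi => h i (Finset.mem_insert_of_mem hi))

theorem diffAt_det {m : ℕ} (f : Pt n → Fin m → Fin m → ℝ) (x : Pt n)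
    (h : ∀ i j, DifferentiableAt ℝ (fun y => f y i j) x) :
    DifferentiableAt ℝ (fun y => (Matrix.of (f y)).det) x := by
  have e : (fun y => (Matrix.of (f y)).det)
      = fun y => ∑ σ : Equiv.Perm (Fin m),
          ((Equiv.Perm.sign σ : ℤ) : ℝ) * ∏ i, f y (σ i) i := by
    funext y
    rw [Matrix.det_apply]
    apply Finset.sum_congr rfl
    intro σ _
    simp [Units.smul_def, zsmul_eq_mul]
  rw [e]
  exact DifferentiableAt.fun_sum fun σ _ =>
    (differentiableAt_const _).mul (diffAt_finset_prod (Finset.univ : Finset (Fin m)) _ _ fun i _ => h _ _)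

theorem sum_split {n p : ℕ} (hpn : p ≤ n) (F : Fin n → ℝ) :
    ∑ c, F c = (∑ i : Fin p, F (Fin.castLE hpn i))
      + ∑ j : Fin (n - p), F ⟨p + (j : ℕ), by have := j.isLt; omega⟩ := by
  have hpq : p + (n - p) = n := by omega
  let e : Fin p ⊕ Fin (n - p) ≃ Fin n := finSumFinEquiv.trans (finCongr hpq)
  have h1 : ∑ c, F c = ∑ s : Fin p ⊕ Fin (n - p), F (e s) :=
    (Fintype.sum_bijective e e.bijective (fun s => F (e s)) F (fun s => rfl)).symm
  rw [h1, Fintype.sum_sum_type]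
  have hl : ∀ i : Fin p, e (Sum.inl i) = Fin.castLE hpn i := fun i => by
    apply Fin.ext; simp [e]
  have hr : ∀ j : Fin (n - p),
      e (Sum.inr j) = (⟨p + (j : ℕ), by have := j.isLt; omega⟩ : Fin n) := fun j => by
    apply Fin.ext; simp [e]
  simp only [hl, hr]

end Helpers
/-- For a conformally separable metric
`ds² = Ξ₁ G_{αβ}(x^γ) dx^α dx^β + Ξ₂ G_{AB}(x^C) dx^A dx^B`, with `P`, `Π` the leaf
metrics, the only nonvanishing components of `M, E, W` are
`M_{αAB} = ∂_α(Ξ₂G_{AB})`, `M_{Aαβ} = -∂_A(Ξ₁G_{αβ})`,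
`E_A = -∂_A log|det(Ξ₁G_{αβ})|`, `W_α = -∂_α log|det(Ξ₂G_{AB})|`,
and consequently `T_{abc} = 0`. -/
theorem stmt_16 {n : ℕ} (p : ℕ) (hp0 : 0 < p) (hpn : p < n)
    (Ξ₁ Ξ₂ : Sc n) (G1 G2 g ginv P Q : Ten2 n)
    (hΞ₁ : ContDiff ℝ 2 Ξ₁) (hΞ₂ : ContDiff ℝ 2 Ξ₂)
    (hΞ₁pos : ∀ x, 0 < Ξ₁ x) (hΞ₂pos : ∀ x, 0 < Ξ₂ x)
    (hG1 : ∀ a b, ContDiff ℝ (⊤ : ℕ∞) (fun x => G1 x a b))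
    (hG2 : ∀ a b, ContDiff ℝ (⊤ : ℕ∞) (fun x => G2 x a b))
    (hG1s : ∀ x a b, G1 x a b = G1 x b a) (hG2s : ∀ x a b, G2 x a b = G2 x b a)
    (hG1dep : ∀ x y : Pt n, (∀ i : Fin n, (i : ℕ) < p → x i = y i) →
      ∀ a b, G1 x a b = G1 y a b)
    (hG2dep : ∀ x y : Pt n, (∀ i : Fin n, p ≤ (i : ℕ) → x i = y i) →
      ∀ a b, G2 x a b = G2 y a b)
    (hgdef : ∀ x a b, g x a b =
      if (a : ℕ) < p ∧ (b : ℕ) < p then Ξ₁ x * G1 x a b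
      else if ¬ (a : ℕ) < p ∧ ¬ (b : ℕ) < p then Ξ₂ x * G2 x a b else 0)
    (hPdef : ∀ x a b, P x a b =
      if (a : ℕ) < p ∧ (b : ℕ) < p then Ξ₁ x * G1 x a b else 0)
    (hQdef : ∀ x a b, Q x a b =
      if ¬ (a : ℕ) < p ∧ ¬ (b : ℕ) < p then Ξ₂ x * G2 x a b else 0)
    (hginv : ∀ a b, ContDiff ℝ (⊤ : ℕ∞) (fun x => ginv x a b))
    (hinv : ∀ x a b, (∑ c, g x a c * ginv x c b) = if a = b then (1:ℝ) else 0) :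
    ∀ x (a b c : Fin n),
      ((a : ℕ) < p → ¬ (b : ℕ) < p → ¬ (c : ℕ) < p →
        Mtens g ginv P x a b c = pd a (fun y => Ξ₂ y * G2 y b c) x)
      ∧ (¬ (a : ℕ) < p → (b : ℕ) < p → (c : ℕ) < p →
        Mtens g ginv P x a b c = -(pd a (fun y => Ξ₁ y * G1 y b c) x))
      ∧ (¬ (((a : ℕ) < p ∧ ¬ (b : ℕ) < p ∧ ¬ (c : ℕ) < p)
            ∨ (¬ (a : ℕ) < p ∧ (b : ℕ) < p ∧ (c : ℕ) < p)) →
        Mtens g ginv P x a b c = 0)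
      ∧ (¬ (a : ℕ) < p →
        Eform g ginv P x a = -(pd a (fun y => Real.log
          |Matrix.det (Matrix.of fun i j : Fin p =>
            Ξ₁ y * G1 y (Fin.castLE hpn.le i) (Fin.castLE hpn.le j))|) x))
      ∧ ((a : ℕ) < p → Eform g ginv P x a = 0)
      ∧ ((a : ℕ) < p →
        Wform g ginv P Q x a = -(pd a (fun y => Real.log
          |Matrix.det (Matrix.of fun i j : Fin (n - p) =>
            Ξ₂ y * G2 y ⟨p + (i : ℕ), by have := i.isLt; omega⟩
              ⟨p + (j : ℕ), by have := j.isLt; omega⟩)|) x))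
      ∧ (¬ (a : ℕ) < p → Wform g ginv P Q x a = 0)
      ∧ Ttens (p : ℝ) g ginv P Q x a b c = 0 := by
  classical
  -- basic differentiability facts
  have dΞ₁ : ∀ x : Pt n, DifferentiableAt ℝ Ξ₁ x := fun x =>
    (hΞ₁.differentiable (by norm_num)).differentiableAt
  have dΞ₂ : ∀ x : Pt n, DifferentiableAt ℝ Ξ₂ x := fun x =>
    (hΞ₂.differentiable (by norm_num)).differentiableAt
  have dG1 : ∀ (a b : Fin n) (x : Pt n), DifferentiableAt ℝ (fun y => G1 y a b) x := fun a b x =>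
    ((hG1 a b).differentiable (by simp)).differentiableAt
  have dG2 : ∀ (a b : Fin n) (x : Pt n), DifferentiableAt ℝ (fun y => G2 y a b) x := fun a b x =>
    ((hG2 a b).differentiable (by simp)).differentiableAt
  have Ξ₁ne : ∀ x : Pt n, Ξ₁ x ≠ 0 := fun x => ne_of_gt (hΞ₁pos x)
  have Ξ₂ne : ∀ x : Pt n, Ξ₂ x ≠ 0 := fun x => ne_of_gt (hΞ₂pos x)
  -- symmetries
  have gsym : ∀ (x : Pt n) (a b : Fin n), g x a b = g x b a := by
    intro x a b
    by_cases ha : (a:ℕ) < p <;> by_cases hb : (b:ℕ) < p <;>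
      simp [hgdef, ha, hb, hG1s x a b, hG2s x a b]
  have Psym : ∀ (x : Pt n) (a b : Fin n), P x a b = P x b a := by
    intro x a b
    by_cases ha : (a:ℕ) < p <;> by_cases hb : (b:ℕ) < p <;>
      simp [hPdef, ha, hb, hG1s x a b]
  -- P, Q versus g
  have hPg : ∀ (x : Pt n) (a b : Fin n), (a:ℕ) < p → P x a b = g x a b := by
    intro x a b ha
    by_cases hb : (b:ℕ) < p <;> simp [hPdef, hgdef, ha, hb]
  have hQg : ∀ (x : Pt n) (a b : Fin n), ¬ (a:ℕ) < p → Q x a b = g x a b := by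
    intro x a b ha
    by_cases hb : (b:ℕ) < p <;> simp [hQdef, hgdef, ha, hb]
  have hPQg : ∀ (x : Pt n) (a b : Fin n), g x a b = P x a b + Q x a b := by
    intro x a b
    by_cases ha : (a:ℕ) < p <;> by_cases hb : (b:ℕ) < p <;>
      simp [hPdef, hQdef, hgdef, ha, hb]
  -- differentiability of P and Q entries
  have dP : ∀ (b c : Fin n) (x : Pt n), DifferentiableAt ℝ (fun y => P y b c) x := by
    intro b c x
    have e : (fun y => P y b c)
        = fun y => if (b:ℕ) < p ∧ (c:ℕ) < p then Ξ₁ y * G1 y b c else 0 :=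
      funext fun y => hPdef y b c
    rw [e]
    by_cases h : (b:ℕ) < p ∧ (c:ℕ) < p
    · simp only [if_pos h]; exact (dΞ₁ x).mul (dG1 b c x)
    · simp only [if_neg h]; exact differentiableAt_const 0
  have dQ : ∀ (b c : Fin n) (x : Pt n), DifferentiableAt ℝ (fun y => Q y b c) x := by
    intro b c x
    have e : (fun y => Q y b c)
        = fun y => if ¬ (b:ℕ) < p ∧ ¬ (c:ℕ) < p then Ξ₂ y * G2 y b c else 0 :=
      funext fun y => hQdef y b c
    rw [e]
    by_cases h : ¬ (b:ℕ) < p ∧ ¬ (c:ℕ) < p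
    · simp only [if_pos h]; exact (dΞ₂ x).mul (dG2 b c x)
    · simp only [if_neg h]; exact differentiableAt_const 0
  -- ginv is symmetric
  have ginvsym : ∀ (x : Pt n) (a b : Fin n), ginv x a b = ginv x b a := by
    intro x a b
    have hAB : (Matrix.of (g x)) * (Matrix.of (ginv x)) = 1 := by
      ext i j
      simpa [Matrix.mul_apply, Matrix.one_apply] using hinv x i j
    have hAT : Matrix.transpose (Matrix.of (g x)) = Matrix.of (g x) := by
      ext i j
      exact gsym x j i
    have hBA : Matrix.transpose (Matrix.of (ginv x)) * (Matrix.of (g x)) = 1 := by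
      calc Matrix.transpose (Matrix.of (ginv x)) * (Matrix.of (g x))
          = Matrix.transpose (Matrix.of (ginv x)) * Matrix.transpose (Matrix.of (g x)) := by
            rw [hAT]
        _ = Matrix.transpose ((Matrix.of (g x)) * (Matrix.of (ginv x))) := by
            rw [Matrix.transpose_mul]
        _ = 1 := by rw [hAB, Matrix.transpose_one]
    have hBB : Matrix.transpose (Matrix.of (ginv x)) = Matrix.of (ginv x) := by
      calc Matrix.transpose (Matrix.of (ginv x))
          = Matrix.transpose (Matrix.of (ginv x)) * ((Matrix.of (g x)) * (Matrix.of (ginv x))) := by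
            rw [hAB, Matrix.mul_one]
        _ = (Matrix.transpose (Matrix.of (ginv x)) * (Matrix.of (g x))) * (Matrix.of (ginv x)) := by
            rw [Matrix.mul_assoc]
        _ = Matrix.of (ginv x) := by rw [hBA, Matrix.one_mul]
    have h := congrFun (congrFun hBB b) a
    simpa [Matrix.transpose_apply] using h
  -- key contraction identities
  have hPginv : ∀ (x : Pt n) (a e : Fin n), (∑ r, P x a r * ginv x r e)
      = if (a:ℕ) < p then (if a = e then (1:ℝ) else 0) else 0 := by
    intro x a e
    by_cases ha : (a:ℕ) < p
    · rw [if_pos ha, ← hinv x a e]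
      exact Finset.sum_congr rfl fun r _ => by rw [hPg x a r ha]
    · rw [if_neg ha]
      apply Finset.sum_eq_zero
      intro r _
      rw [hPdef]
      simp [ha]
  have hQginv : ∀ (x : Pt n) (a e : Fin n), (∑ r, Q x a r * ginv x r e)
      = if ¬ (a:ℕ) < p then (if a = e then (1:ℝ) else 0) else 0 := by
    intro x a e
    by_cases ha : ¬ (a:ℕ) < p
    · rw [if_pos ha, ← hinv x a e]
      exact Finset.sum_congr rfl fun r _ => by rw [hQg x a r ha]
    · rw [if_neg ha]
      apply Finset.sum_eq_zero
      intro r _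
      rw [hQdef]
      simp [not_not.mp ha]
  -- vanishing of derivatives of G1, G2 in the transversal directions
  have pdG1 : ∀ (x : Pt n) (i : Fin n), ¬ (i:ℕ) < p →
      ∀ a b, pd i (fun y => G1 y a b) x = 0 := by
    intro x i hi a b
    apply pd_zero_of_invariant
    intro y t
    apply hG1dep
    intro j hj
    have hji : j ≠ i := by
      intro h
      rw [h] at hj
      omega
    simp [Pi.single_eq_of_ne hji]
  have pdG2 : ∀ (x : Pt n) (i : Fin n), (i:ℕ) < p →
      ∀ a b, pd i (fun y => G2 y a b) x = 0 := by
    intro x i hi a b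
    apply pd_zero_of_invariant
    intro y t
    apply hG2dep
    intro j hj
    have hji : j ≠ i := by
      intro h
      rw [h] at hj
      omega
    simp [Pi.single_eq_of_ne hji]
  -- derivatives of P and Q entries
  have pdP : ∀ (x : Pt n) (i b c : Fin n), pd i (fun y => P y b c) x
      = if (b:ℕ) < p ∧ (c:ℕ) < p then pd i (fun y => Ξ₁ y * G1 y b c) x else 0 := by
    intro x i b c
    by_cases h : (b:ℕ) < p ∧ (c:ℕ) < p
    · rw [if_pos h]
      exact pd_congr (fun y => by rw [hPdef, if_pos h]) x
    · rw [if_neg h]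
      calc pd i (fun y => P y b c) x = pd i (fun _ => (0:ℝ)) x :=
            pd_congr (fun y => by rw [hPdef, if_neg h]) x
        _ = 0 := pd_const _ _ _
  have pdQ : ∀ (x : Pt n) (i b c : Fin n), pd i (fun y => Q y b c) x
      = if ¬ (b:ℕ) < p ∧ ¬ (c:ℕ) < p then pd i (fun y => Ξ₂ y * G2 y b c) x else 0 := by
    intro x i b c
    by_cases h : ¬ (b:ℕ) < p ∧ ¬ (c:ℕ) < p
    · rw [if_pos h]
      exact pd_congr (fun y => by rw [hQdef, if_pos h]) x
    · rw [if_neg h]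
      calc pd i (fun y => Q y b c) x = pd i (fun _ => (0:ℝ)) x :=
            pd_congr (fun y => by rw [hQdef, if_neg h]) x
        _ = 0 := pd_const _ _ _
  have pdΞ₁G1 : ∀ (x : Pt n) (i b c : Fin n), ¬ (i:ℕ) < p →
      pd i (fun y => Ξ₁ y * G1 y b c) x = pd i Ξ₁ x * G1 x b c := by
    intro x i b c hi
    rw [pd_mul (dΞ₁ x) (dG1 b c x), pdG1 x i hi b c]
    ring
  have pdΞ₂G2 : ∀ (x : Pt n) (i b c : Fin n), (i:ℕ) < p →
      pd i (fun y => Ξ₂ y * G2 y b c) x = pd i Ξ₂ x * G2 x b c := by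
    intro x i b c hi
    rw [pd_mul (dΞ₂ x) (dG2 b c x), pdG2 x i hi b c]
    ring
  -- symmetry of the Christoffel symbols
  have hΓsym : ∀ (x : Pt n) (r b c : Fin n),
      christoffel g ginv x r b c = christoffel g ginv x r c b := by
    intro x r b c
    unfold christoffel
    congr 1
    apply Finset.sum_congr rfl
    intro e _
    have h1 : pd e (fun y => g y b c) x = pd e (fun y => g y c b) x :=
      pd_congr (fun y => gsym y b c) x
    rw [h1]
    ring
  -- the key contraction
  have hcontr : ∀ (x : Pt n) (a b c : Fin n),
      (∑ r, christoffel g ginv x r b c * P x a r)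
      = if (a:ℕ) < p then (1/2) * (pd b (fun y => g y c a) x + pd c (fun y => g y b a) x
          - pd a (fun y => g y b c) x) else 0 := by
    intro x a b c
    have step1 : (∑ r, christoffel g ginv x r b c * P x a r)
        = ∑ e, (∑ r, P x a r * ginv x r e) * ((1/2) * (pd b (fun y => g y c e) x
            + pd c (fun y => g y b e) x - pd e (fun y => g y b c) x)) := by
      unfold christoffel
      calc (∑ r, ((1/2) * ∑ e, ginv x r e * (pd b (fun y => g y c e) x
              + pd c (fun y => g y b e) x - pd e (fun y => g y b c) x)) * P x a r)
          = ∑ r, ∑ e, P x a r * ginv x r e * ((1/2) * (pd b (fun y => g y c e) x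
              + pd c (fun y => g y b e) x - pd e (fun y => g y b c) x)) := by
            apply Finset.sum_congr rfl
            intro r _
            rw [Finset.mul_sum, Finset.sum_mul]
            apply Finset.sum_congr rfl
            intro e _
            ring
        _ = ∑ e, ∑ r, P x a r * ginv x r e * ((1/2) * (pd b (fun y => g y c e) x
              + pd c (fun y => g y b e) x - pd e (fun y => g y b c) x)) := Finset.sum_comm
        _ = ∑ e, (∑ r, P x a r * ginv x r e) * ((1/2) * (pd b (fun y => g y c e) x
              + pd c (fun y => g y b e) x - pd e (fun y => g y b c) x)) := by
            apply Finset.sum_congr rfl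
            intro e _
            rw [Finset.sum_mul]
    rw [step1]
    by_cases ha : (a:ℕ) < p
    · rw [if_pos ha]
      have key : ∀ e : Fin n, (∑ r, P x a r * ginv x r e) * ((1/2) * (pd b (fun y => g y c e) x
            + pd c (fun y => g y b e) x - pd e (fun y => g y b c) x))
          = if a = e then (1/2) * (pd b (fun y => g y c e) x
            + pd c (fun y => g y b e) x - pd e (fun y => g y b c) x) else 0 := by
        intro e
        rw [hPginv x a e, if_pos ha]
        split_ifs <;> ring
      rw [Finset.sum_congr rfl fun e _ => key e]
      rw [Finset.sum_ite_eq Finset.univ a (fun e => (1/2) * (pd b (fun y => g y c e) x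
            + pd c (fun y => g y b e) x - pd e (fun y => g y b c) x))]
      simp
    · rw [if_neg ha]
      apply Finset.sum_eq_zero
      intro e _
      rw [hPginv x a e, if_neg ha]
      ring
  -- master formula for M
  have hMform : ∀ (x : Pt n) (a b c : Fin n), Mtens g ginv P x a b c
      = pd b (fun y => P y a c) x + pd c (fun y => P y a b) x - pd a (fun y => P y b c) x
        - (if (a:ℕ) < p then (pd b (fun y => g y c a) x + pd c (fun y => g y b a) x
            - pd a (fun y => g y b c) x) else 0) := by
    intro x a b c
    unfold Mtens cov2
    have e1 : (∑ r, christoffel g ginv x r b a * P x r c)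
        = ∑ r, christoffel g ginv x r a b * P x r c :=
      Finset.sum_congr rfl fun r _ => by rw [hΓsym x r b a]
    have e2 : (∑ r, christoffel g ginv x r c a * P x r b)
        = ∑ r, christoffel g ginv x r a c * P x b r :=
      Finset.sum_congr rfl fun r _ => by rw [hΓsym x r c a, Psym x r b]
    have e3 : (∑ r, christoffel g ginv x r c b * P x a r)
        = ∑ r, christoffel g ginv x r b c * P x a r :=
      Finset.sum_congr rfl fun r _ => by rw [hΓsym x r c b]
    rw [e1, e2, e3, hcontr x a b c]
    split_ifs with ha <;> ring
  -- the two nontrivial M components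
  have hMa : ∀ (x : Pt n) (a b c : Fin n), (a:ℕ) < p →
      Mtens g ginv P x a b c = pd a (fun y => Q y b c) x := by
    intro x a b c ha
    rw [hMform x a b c, if_pos ha]
    have e1 : pd b (fun y => g y c a) x = pd b (fun y => P y a c) x :=
      pd_congr (fun y => by rw [gsym y c a, ← hPg y a c ha]) x
    have e2 : pd c (fun y => g y b a) x = pd c (fun y => P y a b) x :=
      pd_congr (fun y => by rw [gsym y b a, ← hPg y a b ha]) x
    have e3 : pd a (fun y => g y b c) x
        = pd a (fun y => P y b c) x + pd a (fun y => Q y b c) x := by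
      have h : pd a (fun y => g y b c) x = pd a (fun y => P y b c + Q y b c) x :=
        pd_congr (fun y => hPQg y b c) x
      rw [h, pd_add (dP b c x) (dQ b c x)]
    rw [e1, e2, e3]
    ring
  have hMA : ∀ (x : Pt n) (a b c : Fin n), ¬ (a:ℕ) < p →
      Mtens g ginv P x a b c = -(pd a (fun y => P y b c) x) := by
    intro x a b c ha
    rw [hMform x a b c, if_neg ha]
    have e1 : pd b (fun y => P y a c) x = 0 := by
      calc pd b (fun y => P y a c) x = pd b (fun _ => (0:ℝ)) x :=
            pd_congr (fun y => by rw [hPdef]; simp [ha]) x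
        _ = 0 := pd_const _ _ _
    have e2 : pd c (fun y => P y a b) x = 0 := by
      calc pd c (fun y => P y a b) x = pd c (fun _ => (0:ℝ)) x :=
            pd_congr (fun y => by rw [hPdef]; simp [ha]) x
        _ = 0 := pd_const _ _ _
    rw [e1, e2]
    ring
  -- raised projectors
  have hup2P : ∀ (x : Pt n) (c b : Fin n), up2 ginv P x c b
      = if (b:ℕ) < p then ginv x c b else 0 := by
    intro x c b
    unfold up2
    have e1 : ∀ c' : Fin n, (∑ d, ginv x c c' * ginv x b d * P x c' d)
        = ginv x c c' * ∑ d, P x c' d * ginv x d b := by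
      intro c'
      rw [Finset.mul_sum]
      apply Finset.sum_congr rfl
      intro d _
      rw [ginvsym x b d]
      ring
    rw [Finset.sum_congr rfl fun c' _ => e1 c']
    have e2 : ∀ c' : Fin n, ginv x c c' * (∑ d, P x c' d * ginv x d b)
        = if c' = b then (if (b:ℕ) < p then ginv x c b else 0) else 0 := by
      intro c'
      rw [hPginv x c' b]
      by_cases h2 : c' = b
      · subst h2
        by_cases h1 : (c':ℕ) < p <;> simp [h1]
      · by_cases h1 : (c':ℕ) < p <;> simp [h1, h2]
    rw [Finset.sum_congr rfl fun c' _ => e2 c',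
      Finset.sum_ite_eq' Finset.univ b (fun _ => if (b:ℕ) < p then ginv x c b else 0)]
    simp
  have hup2Q : ∀ (x : Pt n) (c b : Fin n), up2 ginv Q x c b
      = if ¬ (b:ℕ) < p then ginv x c b else 0 := by
    intro x c b
    unfold up2
    have e1 : ∀ c' : Fin n, (∑ d, ginv x c c' * ginv x b d * Q x c' d)
        = ginv x c c' * ∑ d, Q x c' d * ginv x d b := by
      intro c'
      rw [Finset.mul_sum]
      apply Finset.sum_congr rfl
      intro d _
      rw [ginvsym x b d]
      ring
    rw [Finset.sum_congr rfl fun c' _ => e1 c']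
    have e2 : ∀ c' : Fin n, ginv x c c' * (∑ d, Q x c' d * ginv x d b)
        = if c' = b then (if ¬ (b:ℕ) < p then ginv x c b else 0) else 0 := by
      intro c'
      rw [hQginv x c' b]
      by_cases h2 : c' = b
      · subst h2
        by_cases h1 : (c':ℕ) < p <;> simp [h1]
      · by_cases h1 : (c':ℕ) < p <;> simp [h1, h2]
    rw [Finset.sum_congr rfl fun c' _ => e2 c',
      Finset.sum_ite_eq' Finset.univ b (fun _ => if ¬ (b:ℕ) < p then ginv x c b else 0)]
    simp
  -- counting
  have hcard1 : (∑ c : Fin n, if (c:ℕ) < p then (1:ℝ) else 0) = p := by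
    rw [sum_split hpn.le (fun c => if (c:ℕ) < p then (1:ℝ) else 0)]
    have h1 : (∑ i : Fin p,
        if ((Fin.castLE hpn.le i : Fin n):ℕ) < p then (1:ℝ) else 0) = p := by
      rw [Finset.sum_congr rfl fun i _ => if_pos (show ((Fin.castLE hpn.le i : Fin n):ℕ) < p
        from i.isLt)]
      simp
    have h2 : (∑ j : Fin (n - p),
        if (((⟨p + (j:ℕ), by have := j.isLt; omega⟩ : Fin n)):ℕ) < p then (1:ℝ) else 0) = 0 := by
      apply Finset.sum_eq_zero
      intro j _
      rw [if_neg]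
      simp
    rw [h1, h2, add_zero]
  have hcard2 : (∑ c : Fin n, if ¬ (c:ℕ) < p then (1:ℝ) else 0) = (n:ℝ) - p := by
    rw [sum_split hpn.le (fun c => if ¬ (c:ℕ) < p then (1:ℝ) else 0)]
    have h1 : (∑ i : Fin p,
        if ¬ ((Fin.castLE hpn.le i : Fin n):ℕ) < p then (1:ℝ) else 0) = 0 := by
      apply Finset.sum_eq_zero
      intro i _
      rw [if_neg]
      simp only [not_not]
      exact i.isLt
    have h2 : (∑ j : Fin (n - p),
        if ¬ (((⟨p + (j:ℕ), by have := j.isLt; omega⟩ : Fin n)):ℕ) < p then (1:ℝ) else 0)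
        = ((n - p : ℕ) : ℝ) := by
      rw [Finset.sum_congr rfl fun j _ => if_pos (by simp)]
      simp
    rw [h1, h2, zero_add]
    push_cast [Nat.cast_sub hpn.le]
    ring
  -- the E form
  have hE0 : ∀ (x : Pt n) (a : Fin n), (a:ℕ) < p → Eform g ginv P x a = 0 := by
    intro x a ha
    unfold Eform
    apply Finset.sum_eq_zero
    intro c _
    apply Finset.sum_eq_zero
    intro b _
    rw [hMa x a c b ha, pdQ x a c b, hup2P x c b]
    by_cases hb : (b:ℕ) < p
    · rw [if_pos hb, if_neg (fun h => h.2 hb)]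
      ring
    · rw [if_neg hb]
      ring
  have hEA : ∀ (x : Pt n) (a : Fin n), ¬ (a:ℕ) < p →
      Eform g ginv P x a = -(pd a Ξ₁ x * (Ξ₁ x)⁻¹ * p) := by
    intro x a ha
    unfold Eform
    have key : ∀ (c b : Fin n), Mtens g ginv P x a c b * up2 ginv P x c b
        = -(pd a Ξ₁ x * (Ξ₁ x)⁻¹) * (P x c b * ginv x b c) := by
      intro c b
      rw [hMA x a c b ha, pdP x a c b, hup2P x c b, hPdef x c b]
      by_cases h : (c:ℕ) < p ∧ (b:ℕ) < p
      · rw [if_pos h, if_pos h, if_pos h.2, pdΞ₁G1 x a c b ha, ginvsym x b c]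
        have hcan : (Ξ₁ x)⁻¹ * Ξ₁ x = 1 := inv_mul_cancel₀ (Ξ₁ne x)
        calc -(pd a Ξ₁ x * G1 x c b) * ginv x c b
            = -(pd a Ξ₁ x * ((Ξ₁ x)⁻¹ * Ξ₁ x) * G1 x c b * ginv x c b) := by rw [hcan]; ring
          _ = -(pd a Ξ₁ x * (Ξ₁ x)⁻¹) * (Ξ₁ x * G1 x c b * ginv x c b) := by ring
      · rw [if_neg h, if_neg h]
        by_cases hb : (b:ℕ) < p <;> simp [hb]
    calc (∑ c, ∑ b, Mtens g ginv P x a c b * up2 ginv P x c b)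
        = ∑ c, ∑ b, -(pd a Ξ₁ x * (Ξ₁ x)⁻¹) * (P x c b * ginv x b c) :=
          Finset.sum_congr rfl fun c _ => Finset.sum_congr rfl fun b _ => key c b
      _ = -(pd a Ξ₁ x * (Ξ₁ x)⁻¹) * ∑ c, (∑ b, P x c b * ginv x b c) := by
          rw [Finset.mul_sum]
          apply Finset.sum_congr rfl
          intro c _
          rw [Finset.mul_sum]
      _ = -(pd a Ξ₁ x * (Ξ₁ x)⁻¹) * ∑ c : Fin n, (if (c:ℕ) < p then (1:ℝ) else 0) := by
          congr 1
          apply Finset.sum_congr rfl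
          intro c _
          rw [hPginv x c c]
          simp
      _ = -(pd a Ξ₁ x * (Ξ₁ x)⁻¹ * p) := by
          rw [hcard1]
          ring
  -- the W form
  have hWA : ∀ (x : Pt n) (a : Fin n), ¬ (a:ℕ) < p → Wform g ginv P Q x a = 0 := by
    intro x a ha
    unfold Wform
    rw [neg_eq_zero]
    apply Finset.sum_eq_zero
    intro c _
    apply Finset.sum_eq_zero
    intro b _
    rw [hMA x a c b ha, pdP x a c b, hup2Q x c b]
    by_cases hb : (b:ℕ) < p
    · rw [if_neg (show ¬ ¬ (b:ℕ) < p from not_not_intro hb)]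
      ring
    · rw [if_neg (show ¬ ((c:ℕ) < p ∧ (b:ℕ) < p) from fun h => hb h.2)]
      ring
  have hWa : ∀ (x : Pt n) (a : Fin n), (a:ℕ) < p →
      Wform g ginv P Q x a = -(pd a Ξ₂ x * (Ξ₂ x)⁻¹ * ((n:ℝ) - p)) := by
    intro x a ha
    unfold Wform
    have key : ∀ (c b : Fin n), Mtens g ginv P x a c b * up2 ginv Q x c b
        = (pd a Ξ₂ x * (Ξ₂ x)⁻¹) * (Q x c b * ginv x b c) := by
      intro c b
      rw [hMa x a c b ha, pdQ x a c b, hup2Q x c b, hQdef x c b]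
      by_cases h : ¬ (c:ℕ) < p ∧ ¬ (b:ℕ) < p
      · rw [if_pos h, if_pos h, if_pos h.2, pdΞ₂G2 x a c b ha, ginvsym x b c]
        have hcan : (Ξ₂ x)⁻¹ * Ξ₂ x = 1 := inv_mul_cancel₀ (Ξ₂ne x)
        calc pd a Ξ₂ x * G2 x c b * ginv x c b
            = pd a Ξ₂ x * ((Ξ₂ x)⁻¹ * Ξ₂ x) * G2 x c b * ginv x c b := by rw [hcan]; ring
          _ = pd a Ξ₂ x * (Ξ₂ x)⁻¹ * (Ξ₂ x * G2 x c b * ginv x c b) := by ring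
      · rw [if_neg h, if_neg h]
        by_cases hb : (b:ℕ) < p <;> simp [hb]
    rw [Finset.sum_congr rfl fun c (_ : c ∈ Finset.univ) =>
      Finset.sum_congr rfl fun b (_ : b ∈ Finset.univ) => key c b]
    have e : (∑ c : Fin n, ∑ b, (pd a Ξ₂ x * (Ξ₂ x)⁻¹) * (Q x c b * ginv x b c))
        = (pd a Ξ₂ x * (Ξ₂ x)⁻¹) * ((n:ℝ) - p) := by
      calc (∑ c : Fin n, ∑ b, (pd a Ξ₂ x * (Ξ₂ x)⁻¹) * (Q x c b * ginv x b c))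
          = (pd a Ξ₂ x * (Ξ₂ x)⁻¹) * ∑ c : Fin n, (∑ b, Q x c b * ginv x b c) := by
            rw [Finset.mul_sum]
            apply Finset.sum_congr rfl
            intro c _
            rw [Finset.mul_sum]
        _ = (pd a Ξ₂ x * (Ξ₂ x)⁻¹) * ∑ c : Fin n, (if ¬ (c:ℕ) < p then (1:ℝ) else 0) := by
            congr 1
            apply Finset.sum_congr rfl
            intro c _
            rw [hQginv x c c]
            simp
        _ = (pd a Ξ₂ x * (Ξ₂ x)⁻¹) * ((n:ℝ) - p) := by rw [hcard2]
    rw [e]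
  -- determinant lemma for the first block
  have hdetE : ∀ (x : Pt n) (a : Fin n), ¬ (a:ℕ) < p →
      pd a (fun y => Real.log
        |Matrix.det (Matrix.of fun i j : Fin p =>
          Ξ₁ y * G1 y (Fin.castLE hpn.le i) (Fin.castLE hpn.le j))|) x
      = (p:ℝ) * ((Ξ₁ x)⁻¹ * pd a Ξ₁ x) := by
    intro x a ha
    have hblock : ∀ y : Pt n,
        (Matrix.of fun i j : Fin p =>
          Ξ₁ y * G1 y (Fin.castLE hpn.le i) (Fin.castLE hpn.le j)) *
        (Matrix.of fun i j : Fin p =>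
          ginv y (Fin.castLE hpn.le i) (Fin.castLE hpn.le j)) = 1 := by
      intro y
      ext i j
      have hsplit := sum_split hpn.le
        (fun c => g y (Fin.castLE hpn.le i) c * ginv y c (Fin.castLE hpn.le j))
      have hthis := hinv y (Fin.castLE hpn.le i) (Fin.castLE hpn.le j)
      rw [hsplit] at hthis
      have hzero : (∑ m : Fin (n - p),
          g y (Fin.castLE hpn.le i) ⟨p + (m:ℕ), by have := m.isLt; omega⟩ *
          ginv y ⟨p + (m:ℕ), by have := m.isLt; omega⟩ (Fin.castLE hpn.le j)) = 0 := by
        apply Finset.sum_eq_zero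
        intro m _
        have hg0 : g y (Fin.castLE hpn.le i) ⟨p + (m:ℕ), by have := m.isLt; omega⟩ = 0 := by
          rw [hgdef, if_neg (by rintro ⟨-, h2⟩; exact absurd h2 (by simp)),
            if_neg (by rintro ⟨h1, -⟩; exact h1 i.isLt)]
        rw [hg0, zero_mul]
      rw [hzero, add_zero] at hthis
      have hgs : ∀ k : Fin p, g y (Fin.castLE hpn.le i) (Fin.castLE hpn.le k)
          = Ξ₁ y * G1 y (Fin.castLE hpn.le i) (Fin.castLE hpn.le k) := fun k => by
        rw [hgdef, if_pos ⟨i.isLt, k.isLt⟩]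
      have hmain : (∑ k : Fin p, (Ξ₁ y * G1 y (Fin.castLE hpn.le i) (Fin.castLE hpn.le k))
          * ginv y (Fin.castLE hpn.le k) (Fin.castLE hpn.le j)) = if i = j then (1:ℝ) else 0 := by
        calc (∑ k : Fin p, (Ξ₁ y * G1 y (Fin.castLE hpn.le i) (Fin.castLE hpn.le k))
              * ginv y (Fin.castLE hpn.le k) (Fin.castLE hpn.le j))
            = ∑ k : Fin p, g y (Fin.castLE hpn.le i) (Fin.castLE hpn.le k)
              * ginv y (Fin.castLE hpn.le k) (Fin.castLE hpn.le j) :=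
              Finset.sum_congr rfl fun k _ => by rw [hgs k]
          _ = if Fin.castLE hpn.le i = Fin.castLE hpn.le j then 1 else 0 := hthis
          _ = if i = j then (1:ℝ) else 0 := by simp [Fin.castLE_inj]
      rw [Matrix.mul_apply, Matrix.one_apply]
      simpa using hmain
    have hDne : ∀ y : Pt n, Matrix.det (Matrix.of fun i j : Fin p =>
        Ξ₁ y * G1 y (Fin.castLE hpn.le i) (Fin.castLE hpn.le j)) ≠ 0 := by
      intro y
      have h := congrArg Matrix.det (hblock y)
      rw [Matrix.det_mul, Matrix.det_one] at h
      exact left_ne_zero_of_mul_eq_one h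
    have hDsmul : ∀ y : Pt n, Matrix.det (Matrix.of fun i j : Fin p =>
        Ξ₁ y * G1 y (Fin.castLE hpn.le i) (Fin.castLE hpn.le j))
        = Ξ₁ y ^ p * Matrix.det (Matrix.of fun i j : Fin p =>
          G1 y (Fin.castLE hpn.le i) (Fin.castLE hpn.le j)) := by
      intro y
      have h : (Matrix.of fun i j : Fin p =>
          Ξ₁ y * G1 y (Fin.castLE hpn.le i) (Fin.castLE hpn.le j))
          = Ξ₁ y • (Matrix.of fun i j : Fin p =>
            G1 y (Fin.castLE hpn.le i) (Fin.castLE hpn.le j)) := by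
        ext i j
        simp [Matrix.smul_apply, smul_eq_mul]
      rw [h, Matrix.det_smul]
      simp
    have hD0ne : ∀ y : Pt n, Matrix.det (Matrix.of fun i j : Fin p =>
        G1 y (Fin.castLE hpn.le i) (Fin.castLE hpn.le j)) ≠ 0 := by
      intro y
      have h := hDne y
      rw [hDsmul y] at h
      exact right_ne_zero_of_mul h
    have heq : ∀ y : Pt n, Real.log
        |Matrix.det (Matrix.of fun i j : Fin p =>
          Ξ₁ y * G1 y (Fin.castLE hpn.le i) (Fin.castLE hpn.le j))|
        = (p:ℝ) * Real.log (Ξ₁ y) + Real.log (Matrix.det (Matrix.of fun i j : Fin p =>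
          G1 y (Fin.castLE hpn.le i) (Fin.castLE hpn.le j))) := by
      intro y
      rw [Real.log_abs, hDsmul y,
        Real.log_mul (pow_ne_zero p (Ξ₁ne y)) (hD0ne y), Real.log_pow]
    rw [pd_congr heq x]
    have hd1 : DifferentiableAt ℝ (fun y => (p:ℝ) * Real.log (Ξ₁ y)) x :=
      (differentiableAt_const _).mul ((dΞ₁ x).log (Ξ₁ne x))
    have hd2 : DifferentiableAt ℝ (fun y => Real.log (Matrix.det (Matrix.of fun i j : Fin p =>
        G1 y (Fin.castLE hpn.le i) (Fin.castLE hpn.le j)))) x :=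
      (diffAt_det (fun y i j => G1 y (Fin.castLE hpn.le i) (Fin.castLE hpn.le j)) x
        (fun i j => dG1 _ _ x)).log (hD0ne x)
    rw [pd_add hd1 hd2]
    have hz : pd a (fun y => Real.log (Matrix.det (Matrix.of fun i j : Fin p =>
        G1 y (Fin.castLE hpn.le i) (Fin.castLE hpn.le j)))) x = 0 := by
      apply pd_zero_of_invariant
      intro y t
      congr 1
      congr 1
      ext i j
      simp only [Matrix.of_apply]
      apply hG1dep
      intro k hk
      have hka : k ≠ a := by
        intro hcon
        rw [hcon] at hk
        omega
      simp [Pi.single_eq_of_ne hka]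
    have hm : pd a (fun y => (p:ℝ) * Real.log (Ξ₁ y)) x
        = (p:ℝ) * ((Ξ₁ x)⁻¹ * pd a Ξ₁ x) := by
      rw [pd_mul (differentiableAt_const ((p:ℝ))) ((dΞ₁ x).log (Ξ₁ne x)),
        pd_const, pd_log (dΞ₁ x) (Ξ₁ne x)]
      ring
    rw [hz, hm, add_zero]
  -- determinant lemma for the second block
  have hdetW : ∀ (x : Pt n) (a : Fin n), (a:ℕ) < p →
      pd a (fun y => Real.log
        |Matrix.det (Matrix.of fun i j : Fin (n - p) =>
          Ξ₂ y * G2 y ⟨p + (i : ℕ), by have := i.isLt; omega⟩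
            ⟨p + (j : ℕ), by have := j.isLt; omega⟩)|) x
      = ((n:ℝ) - p) * ((Ξ₂ x)⁻¹ * pd a Ξ₂ x) := by
    intro x a ha
    have hblock : ∀ y : Pt n,
        (Matrix.of fun i j : Fin (n - p) =>
          Ξ₂ y * G2 y ⟨p + (i : ℕ), by have := i.isLt; omega⟩
            ⟨p + (j : ℕ), by have := j.isLt; omega⟩) *
        (Matrix.of fun i j : Fin (n - p) =>
          ginv y ⟨p + (i : ℕ), by have := i.isLt; omega⟩
            ⟨p + (j : ℕ), by have := j.isLt; omega⟩) = 1 := by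
      intro y
      ext i j
      have hsplit := sum_split hpn.le
        (fun c => g y ⟨p + (i : ℕ), by have := i.isLt; omega⟩ c *
          ginv y c ⟨p + (j : ℕ), by have := j.isLt; omega⟩)
      have hthis := hinv y (⟨p + (i : ℕ), by have := i.isLt; omega⟩ : Fin n)
        (⟨p + (j : ℕ), by have := j.isLt; omega⟩ : Fin n)
      rw [hsplit] at hthis
      have hzero : (∑ k : Fin p,
          g y ⟨p + (i : ℕ), by have := i.isLt; omega⟩ (Fin.castLE hpn.le k) *
          ginv y (Fin.castLE hpn.le k) ⟨p + (j : ℕ), by have := j.isLt; omega⟩) = 0 := by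
        apply Finset.sum_eq_zero
        intro k _
        have hg0 : g y (⟨p + (i : ℕ), by have := i.isLt; omega⟩ : Fin n)
            (Fin.castLE hpn.le k) = 0 := by
          rw [hgdef, if_neg (by rintro ⟨h1, -⟩; exact absurd h1 (by simp)),
            if_neg (by rintro ⟨-, h2⟩; exact h2 k.isLt)]
        rw [hg0, zero_mul]
      rw [hzero, zero_add] at hthis
      have hgs : ∀ m : Fin (n - p),
          g y (⟨p + (i : ℕ), by have := i.isLt; omega⟩ : Fin n)
            ⟨p + (m : ℕ), by have := m.isLt; omega⟩
          = Ξ₂ y * G2 y ⟨p + (i : ℕ), by have := i.isLt; omega⟩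
            ⟨p + (m : ℕ), by have := m.isLt; omega⟩ := fun m => by
        rw [hgdef, if_neg (by rintro ⟨h1, -⟩; exact absurd h1 (by simp)),
          if_pos ⟨by simp, by simp⟩]
      have hmain : (∑ m : Fin (n - p),
          (Ξ₂ y * G2 y ⟨p + (i : ℕ), by have := i.isLt; omega⟩
            ⟨p + (m : ℕ), by have := m.isLt; omega⟩) *
          ginv y ⟨p + (m : ℕ), by have := m.isLt; omega⟩
            ⟨p + (j : ℕ), by have := j.isLt; omega⟩) = if i = j then (1:ℝ) else 0 := by
        calc (∑ m : Fin (n - p),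
            (Ξ₂ y * G2 y ⟨p + (i : ℕ), by have := i.isLt; omega⟩
              ⟨p + (m : ℕ), by have := m.isLt; omega⟩) *
            ginv y ⟨p + (m : ℕ), by have := m.isLt; omega⟩
              ⟨p + (j : ℕ), by have := j.isLt; omega⟩)
            = ∑ m : Fin (n - p),
              g y (⟨p + (i : ℕ), by have := i.isLt; omega⟩ : Fin n)
                ⟨p + (m : ℕ), by have := m.isLt; omega⟩ *
              ginv y ⟨p + (m : ℕ), by have := m.isLt; omega⟩
                ⟨p + (j : ℕ), by have := j.isLt; omega⟩ :=
              Finset.sum_congr rfl fun m _ => by rw [hgs m]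
          _ = if (⟨p + (i : ℕ), by have := i.isLt; omega⟩ : Fin n)
              = ⟨p + (j : ℕ), by have := j.isLt; omega⟩ then 1 else 0 := hthis
          _ = if i = j then (1:ℝ) else 0 := by
              by_cases hij : i = j
              · subst hij; simp
              · rw [if_neg hij, if_neg (fun hcon => hij (by
                  have hval : p + (i:ℕ) = p + (j:ℕ) := congrArg Fin.val hcon
                  exact Fin.ext (by omega)))]
      rw [Matrix.mul_apply, Matrix.one_apply]
      simpa using hmain
    have hDne : ∀ y : Pt n, Matrix.det (Matrix.of fun i j : Fin (n - p) =>
        Ξ₂ y * G2 y ⟨p + (i : ℕ), by have := i.isLt; omega⟩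
          ⟨p + (j : ℕ), by have := j.isLt; omega⟩) ≠ 0 := by
      intro y
      have h := congrArg Matrix.det (hblock y)
      rw [Matrix.det_mul, Matrix.det_one] at h
      exact left_ne_zero_of_mul_eq_one h
    have hDsmul : ∀ y : Pt n, Matrix.det (Matrix.of fun i j : Fin (n - p) =>
        Ξ₂ y * G2 y ⟨p + (i : ℕ), by have := i.isLt; omega⟩
          ⟨p + (j : ℕ), by have := j.isLt; omega⟩)
        = Ξ₂ y ^ (n - p) * Matrix.det (Matrix.of fun i j : Fin (n - p) =>
          G2 y ⟨p + (i : ℕ), by have := i.isLt; omega⟩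
            ⟨p + (j : ℕ), by have := j.isLt; omega⟩) := by
      intro y
      have h : (Matrix.of fun i j : Fin (n - p) =>
          Ξ₂ y * G2 y ⟨p + (i : ℕ), by have := i.isLt; omega⟩
            ⟨p + (j : ℕ), by have := j.isLt; omega⟩)
          = Ξ₂ y • (Matrix.of fun i j : Fin (n - p) =>
            G2 y ⟨p + (i : ℕ), by have := i.isLt; omega⟩
              ⟨p + (j : ℕ), by have := j.isLt; omega⟩) := by
        ext i j
        simp [Matrix.smul_apply, smul_eq_mul]
      rw [h, Matrix.det_smul]
      simp
    have hD0ne : ∀ y : Pt n, Matrix.det (Matrix.of fun i j : Fin (n - p) =>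
        G2 y ⟨p + (i : ℕ), by have := i.isLt; omega⟩
          ⟨p + (j : ℕ), by have := j.isLt; omega⟩) ≠ 0 := by
      intro y
      have h := hDne y
      rw [hDsmul y] at h
      exact right_ne_zero_of_mul h
    have heq : ∀ y : Pt n, Real.log
        |Matrix.det (Matrix.of fun i j : Fin (n - p) =>
          Ξ₂ y * G2 y ⟨p + (i : ℕ), by have := i.isLt; omega⟩
            ⟨p + (j : ℕ), by have := j.isLt; omega⟩)|
        = ((n - p : ℕ):ℝ) * Real.log (Ξ₂ y)
          + Real.log (Matrix.det (Matrix.of fun i j : Fin (n - p) =>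
            G2 y ⟨p + (i : ℕ), by have := i.isLt; omega⟩
              ⟨p + (j : ℕ), by have := j.isLt; omega⟩)) := by
      intro y
      rw [Real.log_abs, hDsmul y,
        Real.log_mul (pow_ne_zero _ (Ξ₂ne y)) (hD0ne y), Real.log_pow]
    rw [pd_congr heq x]
    have hd1 : DifferentiableAt ℝ (fun y => ((n - p : ℕ):ℝ) * Real.log (Ξ₂ y)) x :=
      (differentiableAt_const _).mul ((dΞ₂ x).log (Ξ₂ne x))
    have hd2 : DifferentiableAt ℝ (fun y => Real.log (Matrix.det
        (Matrix.of fun i j : Fin (n - p) =>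
          G2 y ⟨p + (i : ℕ), by have := i.isLt; omega⟩
            ⟨p + (j : ℕ), by have := j.isLt; omega⟩))) x :=
      (diffAt_det (fun y i j => G2 y ⟨p + (i : ℕ), by have := i.isLt; omega⟩
          ⟨p + (j : ℕ), by have := j.isLt; omega⟩) x
        (fun i j => dG2 _ _ x)).log (hD0ne x)
    rw [pd_add hd1 hd2]
    have hz : pd a (fun y => Real.log (Matrix.det
        (Matrix.of fun i j : Fin (n - p) =>
          G2 y ⟨p + (i : ℕ), by have := i.isLt; omega⟩
            ⟨p + (j : ℕ), by have := j.isLt; omega⟩))) x = 0 := by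
      apply pd_zero_of_invariant
      intro y t
      congr 1
      congr 1
      ext i j
      simp only [Matrix.of_apply]
      apply hG2dep
      intro k hk
      have hka : k ≠ a := by
        intro hcon
        rw [hcon] at hk
        omega
      simp [Pi.single_eq_of_ne hka]
    have hm : pd a (fun y => ((n - p : ℕ):ℝ) * Real.log (Ξ₂ y)) x
        = ((n:ℝ) - p) * ((Ξ₂ x)⁻¹ * pd a Ξ₂ x) := by
      rw [pd_mul (differentiableAt_const (((n - p : ℕ):ℝ))) ((dΞ₂ x).log (Ξ₂ne x)),
        pd_const, pd_log (dΞ₂ x) (Ξ₂ne x)]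
      push_cast [Nat.cast_sub hpn.le]
      ring
    rw [hz, hm, add_zero]
  -- assembling all the components
  intro x a b c
  refine ⟨?_, ?_, ?_, ?_, ?_, ?_, ?_, ?_⟩
  · intro ha hb hc
    rw [hMa x a b c ha, pdQ x a b c, if_pos ⟨hb, hc⟩]
  · intro ha hb hc
    rw [hMA x a b c ha, pdP x a b c, if_pos ⟨hb, hc⟩]
  · intro hnot
    by_cases ha : (a:ℕ) < p
    · rw [hMa x a b c ha, pdQ x a b c,
        if_neg (fun h => hnot (Or.inl ⟨ha, h.1, h.2⟩))]
    · rw [hMA x a b c ha, pdP x a b c,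
        if_neg (fun h => hnot (Or.inr ⟨ha, h.1, h.2⟩)), neg_zero]
  · intro ha
    rw [hEA x a ha, hdetE x a ha]
    ring
  · intro ha
    exact hE0 x a ha
  · intro ha
    rw [hWa x a ha, hdetW x a ha]
    ring
  · intro ha
    exact hWA x a ha
  · unfold Ttens
    by_cases ha : (a:ℕ) < p
    · rw [hMa x a b c ha, pdQ x a b c, hE0 x a ha, hWa x a ha]
      by_cases hbc : ¬ (b:ℕ) < p ∧ ¬ (c:ℕ) < p
      · rw [if_pos hbc, pdΞ₂G2 x a b c ha, hQdef x b c, if_pos hbc]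
        have hnp : ((n:ℝ) - p) ≠ 0 := by
          have h1 : (p:ℝ) < (n:ℝ) := by exact_mod_cast hpn
          linarith
        have hΞ : (Ξ₂ x)⁻¹ * Ξ₂ x = 1 := inv_mul_cancel₀ (Ξ₂ne x)
        have hcan : 1/((n:ℝ) - p) * ((n:ℝ) - p) = 1 := by
          field_simp
        calc pd a Ξ₂ x * G2 x b c
              + 1/((n:ℝ) - p) * -(pd a Ξ₂ x * (Ξ₂ x)⁻¹ * ((n:ℝ) - p)) * (Ξ₂ x * G2 x b c)
              - 1/(p:ℝ) * 0 * P x b c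
            = pd a Ξ₂ x * G2 x b c
              - (1/((n:ℝ) - p) * ((n:ℝ) - p)) * ((Ξ₂ x)⁻¹ * Ξ₂ x) * (pd a Ξ₂ x * G2 x b c) := by
              ring
          _ = 0 := by rw [hΞ, hcan]; ring
      · rw [if_neg hbc, hQdef x b c, if_neg hbc]
        ring
    · rw [hMA x a b c ha, pdP x a b c, hWA x a ha, hEA x a ha]
      by_cases hbc : (b:ℕ) < p ∧ (c:ℕ) < p
      · rw [if_pos hbc, pdΞ₁G1 x a b c ha, hPdef x b c, if_pos hbc]
        have hp' : (p:ℝ) ≠ 0 := Nat.cast_ne_zero.mpr hp0.ne'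
        have hΞ : (Ξ₁ x)⁻¹ * Ξ₁ x = 1 := inv_mul_cancel₀ (Ξ₁ne x)
        have hcan : 1/(p:ℝ) * (p:ℝ) = 1 := by field_simp
        calc -(pd a Ξ₁ x * G1 x b c)
              + 1/((n:ℝ) - p) * 0 * Q x b c
              - 1/(p:ℝ) * -(pd a Ξ₁ x * (Ξ₁ x)⁻¹ * p) * (Ξ₁ x * G1 x b c)
            = (1/(p:ℝ) * (p:ℝ)) * ((Ξ₁ x)⁻¹ * Ξ₁ x) * (pd a Ξ₁ x * G1 x b c)
              - pd a Ξ₁ x * G1 x b c := by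
              ring
          _ = 0 := by rw [hΞ, hcan]; ring
      · rw [if_neg hbc, hPdef x b c, if_neg hbc]
        ring
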